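/- Let π be a set of primes, G a finite group, N a normal subgroup of G and H a subgroup with N ≤ H ≤ G. If H/N is N^π-Dnormal in G/N, then H is N^π-Dnormal in G. -/

import Mathlib

/-- A (finite) group is a `π`-group if every prime dividing its order lies in `π`. -/
def IsPiGroup (π : Set ℕ) (G : Type*) [Group G] : Prop :=
  ∀ p : ℕ, p.Prime → p ∣ Nat.card G → p ∈ π

/-- `O^π(G)`: the smallest normal subgroup of `G` whose quotient is a `π`-group
(recall that `N.index = Nat.card (G ⧸ N)`). -/
def piResidual (π : Set ℕ) (G : Type*) [Group G] : Subgroup G :=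
  ⨅ N ∈ {N : Subgroup G | N.Normal ∧ ∀ p : ℕ, p.Prime → p ∣ N.index → p ∈ π}, N

/-- `O_π(G)`: the largest normal `π`-subgroup of `G`. -/
def piCore (π : Set ℕ) (G : Type*) [Group G] : Subgroup G :=
  ⨆ N ∈ {N : Subgroup G | N.Normal ∧ IsPiGroup π N}, N

/-- `O^π(H)` for a subgroup `H ≤ G`, regarded as a subgroup of `G`. -/
def piResidualIn (π : Set ℕ) {G : Type*} [Group G] (H : Subgroup G) : Subgroup G :=
  (piResidual π H).map H.subtype

/-- `H` is `N^π`-Dnormal in `G`: if `|π| ≤ 1` this means `H` is normal in `G`; if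
`|π| ≥ 2` it means that `O^π(H)` is normal in `G` and `O^π(G)` normalizes `H`. -/
def IsDnormal (π : Set ℕ) {G : Type*} [Group G] (H : Subgroup G) : Prop :=
  (π.Subsingleton ∧ H.Normal) ∨
  (¬ π.Subsingleton ∧ (piResidualIn π H).Normal ∧ piResidual π G ≤ Subgroup.normalizer (H : Set G))

/-- `S` is `N^π`-Dsubnormal in `G`: there is a chain `S = S₀ ≤ S₁ ≤ ⋯ ≤ Sₙ = G`
with each `Sᵢ` being `N^π`-Dnormal in `Sᵢ₊₁`. -/
def IsDsubnormal (π : Set ℕ) {G : Type*} [Group G] (S : Subgroup G) : Prop :=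
  ∃ (n : ℕ) (c : Fin (n + 1) → Subgroup G), c 0 = S ∧ c (Fin.last n) = ⊤ ∧
    ∀ i : Fin n, c i.castSucc ≤ c i.succ ∧
      IsDnormal π ((c i.castSucc).subgroupOf (c i.succ))

/-- `H` is subnormal in `G`. -/
def IsSubnormal' {G : Type*} [Group G] (H : Subgroup G) : Prop :=
  ∃ (n : ℕ) (c : Fin (n + 1) → Subgroup G), c 0 = H ∧ c (Fin.last n) = ⊤ ∧
    ∀ i : Fin n, c i.castSucc ≤ c i.succ ∧
      ((c i.castSucc).subgroupOf (c i.succ)).Normal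

/-- The class `N^π`: groups that are the (internal) direct product of a `π`-group and a
nilpotent `π'`-group. -/
def IsNPiGroup (π : Set ℕ) (G : Type*) [Group G] : Prop :=
  ∃ H K : Subgroup G, H.Normal ∧ K.Normal ∧ H ⊓ K = ⊥ ∧ H ⊔ K = ⊤ ∧
    IsPiGroup π H ∧ IsPiGroup πᶜ K ∧ Group.IsNilpotent K

/-- The `N^π`-residual `G^{N^π}`: the smallest normal subgroup of `G` whose quotient
belongs to the class `N^π`. -/
def nPiResidual (π : Set ℕ) (G : Type*) [Group G] : Subgroup G :=
  ⨅ N ∈ {N : Subgroup G | ∃ h : N.Normal, letI := h; IsNPiGroup π (G ⧸ N)}, N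

/-- `G` is `π'`-soluble: it has a normal series each of whose factors is either a
`π`-group or a `p`-group for some prime `p ∉ π`. -/
def IsPiPrimeSoluble (π : Set ℕ) (G : Type*) [Group G] : Prop :=
  ∃ (n : ℕ) (c : Fin (n + 1) → Subgroup G), c 0 = ⊥ ∧ c (Fin.last n) = ⊤ ∧
    ∀ i : Fin n, c i.castSucc ≤ c i.succ ∧
      ((c i.castSucc).subgroupOf (c i.succ)).Normal ∧
      ((∀ p : ℕ, p.Prime → p ∣ ((c i.castSucc).subgroupOf (c i.succ)).index → p ∈ π) ∨
        ∃ p : ℕ, p.Prime ∧ p ∉ π ∧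
          ∃ k : ℕ, ((c i.castSucc).subgroupOf (c i.succ)).index = p ^ k)

/-- An `N^π`-Fitting set of `G`. -/
def IsNPiFittingSet (π : Set ℕ) {G : Type*} [Group G] (F : Set (Subgroup G)) : Prop :=
  F.Nonempty ∧
  (∀ S ∈ F, ∀ T : Subgroup G, T ≤ S → IsDsubnormal π (T.subgroupOf S) → T ∈ F) ∧
  (∀ S ∈ F, ∀ T ∈ F, IsDnormal π (S.subgroupOf (S ⊔ T)) →
    IsDnormal π (T.subgroupOf (S ⊔ T)) → S ⊔ T ∈ F) ∧
  (∀ S ∈ F, ∀ x : G, S.map (MulAut.conj x).toMonoidHom ∈ F)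

/-- The `F`-radical `H_F` of a subgroup `H` of `G`: the join of all subgroups of `H`
belonging to `F` that are normal in `H`. -/
def fittingRadical {G : Type*} [Group G] (F : Set (Subgroup G)) (H : Subgroup G) : Subgroup G :=
  ⨆ S ∈ {S : Subgroup G | S ∈ F ∧ S ≤ H ∧ (S.subgroupOf H).Normal}, S

/-- `M` is an `F`-maximal subgroup of `K`. -/
def IsFMaximalIn {G : Type*} [Group G] (F : Set (Subgroup G)) (M K : Subgroup G) : Prop :=
  M ∈ F ∧ M ≤ K ∧ ∀ S ∈ F, S ≤ K → M ≤ S → S = M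

/-- `V` is an `F`-injector of `G`. -/
def IsInjector {G : Type*} [Group G] (F : Set (Subgroup G)) (V : Subgroup G) : Prop :=
  ∀ K : Subgroup G, IsSubnormal' K → IsFMaximalIn F (V ⊓ K) K

/-- `V` is an `F`-injector of the subgroup `N` of `G`. -/
def IsInjectorIn {G : Type*} [Group G] (F : Set (Subgroup G)) (V N : Subgroup G) : Prop :=
  V ≤ N ∧ ∀ K : Subgroup G, K ≤ N → IsSubnormal' (K.subgroupOf N) → IsFMaximalIn F (V ⊓ K) K

/-- `M` is an `N^π`-maximal subgroup of `X`. -/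
def IsNPiMaximal (π : Set ℕ) {X : Type*} [Group X] (M : Subgroup X) : Prop :=
  IsNPiGroup π M ∧ ∀ M' : Subgroup X, IsNPiGroup π M' → M ≤ M' → M' = M

/-- `U` is an `N^π`-projector of `G`: `UK/K` is `N^π`-maximal in `G/K` for every
normal subgroup `K` of `G`. -/
def IsNPiProjector (π : Set ℕ) {G : Type*} [Group G] (U : Subgroup G) : Prop :=
  ∀ K : Subgroup G, ∀ hK : K.Normal,
    letI := hK
    IsNPiMaximal π ((U ⊔ K).map (QuotientGroup.mk' K))

/-- An `N^π`-Fitting class of (finite) groups: a non-empty isomorphism-closed class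
closed under `N^π`-Dnormal subgroups and under joins of pairs of `N^π`-Dnormal
subgroups. -/
def IsNPiFittingClass (π : Set ℕ) (F : (H : Type) → [_inst : Group H] → Prop) : Prop :=
  (∃ (H : Type) (g : Group H) (_ : Finite H), F H (_inst := g)) ∧
  (∀ (H K : Type) [Group H] [Group K] [Finite H] [Finite K],
    F H → Nonempty (H ≃* K) → F K) ∧
  (∀ (H : Type) [Group H] [Finite H] (N : Subgroup H),
    F H → IsDnormal π N → F ↥N) ∧
  (∀ (H : Type) [Group H] [Finite H] (M N : Subgroup H),
    F ↥M → F ↥N → IsDnormal π M → IsDnormal π N → M ⊔ N = ⊤ → F H)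

/-!
In a finite group `O^π` commutes with surjective homomorphisms, so with `f : G → G/N` we get
`O^π(H/N) = f(O^π(H))` and `O^π(G/N) = f(O^π(G))`. Normality of `f(O^π(H))` pulls back to
normality of `O^π(H)N`; since `O^π(H) ≤ O^π(H)N ≤ H` and `O^π` is monotone and idempotent,
`O^π(O^π(H)N) = O^π(H)`, which is characteristic in the normal subgroup `O^π(H)N` and hence normal
in `G`. The normalizer condition pulls back along `f` because `N ≤ H`.
-/

def IsPiNumber (π : Set ℕ) (n : ℕ) : Prop :=
  ∀ p : ℕ, p.Prime → p ∣ n → p ∈ π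

namespace IsPiNumber

variable {π : Set ℕ} {m n : ℕ}

theorem of_dvd (hn : IsPiNumber π n) (hmn : m ∣ n) : IsPiNumber π m :=
  fun p hp hpm => hn p hp (hpm.trans hmn)

theorem mul (hm : IsPiNumber π m) (hn : IsPiNumber π n) : IsPiNumber π (m * n) :=
  fun p hp hpmn => (hp.dvd_mul.mp hpmn).elim (hm p hp) (hn p hp)

theorem one : IsPiNumber π 1 :=
  fun _ hp hp1 => absurd (Nat.eq_one_of_dvd_one hp1) hp.ne_one

end IsPiNumber

section PiResidual

variable {π : Set ℕ} {G G' : Type*} [Group G] [Group G']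

def normalPiIndex (π : Set ℕ) (G : Type*) [Group G] : Set (Subgroup G) :=
  {K | K.Normal ∧ IsPiNumber π K.index}

theorem piResidual_le {K : Subgroup G} (hK : K.Normal) (hKπ : IsPiNumber π K.index) :
    piResidual π G ≤ K :=
  iInf₂_le K ⟨hK, hKπ⟩

theorem top_mem_normalPiIndex : (⊤ : Subgroup G) ∈ normalPiIndex π G :=
  ⟨inferInstance, by simpa using IsPiNumber.one⟩

theorem infClosed_normalPiIndex : InfClosed (normalPiIndex π G) := by
  rintro K ⟨hK, hKπ⟩ L ⟨hL, hLπ⟩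
  refine ⟨Subgroup.normal_inf_normal K L, ?_⟩
  rw [← Subgroup.relIndex_mul_index (inf_le_right : K ⊓ L ≤ L), Subgroup.inf_relIndex_right]
  exact (hKπ.of_dvd (Subgroup.relIndex_dvd_index_of_normal K L)).mul hLπ

theorem piResidual_mem_normalPiIndex [Finite G] : piResidual π G ∈ normalPiIndex π G :=
  infClosed_normalPiIndex.biInf_mem (Set.toFinite _) top_mem_normalPiIndex fun _ hK => hK

theorem piResidual_normal [Finite G] : (piResidual π G).Normal :=
  piResidual_mem_normalPiIndex.1

theorem isPiNumber_index_piResidual [Finite G] : IsPiNumber π (piResidual π G).index :=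
  piResidual_mem_normalPiIndex.2

theorem map_piResidual_le (f : G →* G') : (piResidual π G).map f ≤ piResidual π G' :=
  le_iInf₂ fun K ⟨hK, hKπ⟩ => Subgroup.map_le_iff_le_comap.mpr <| piResidual_le (hK.comap f) <| by
    rw [Subgroup.index_comap]
    exact IsPiNumber.of_dvd hKπ (Subgroup.relIndex_dvd_index_of_normal K _)

theorem map_piResidual [Finite G] {f : G →* G'} (hf : Function.Surjective f) :
    (piResidual π G).map f = piResidual π G' :=
  le_antisymm (map_piResidual_le f) <| piResidual_le (piResidual_normal.map f hf)
    (isPiNumber_index_piResidual.of_dvd (Subgroup.index_map_dvd _ hf))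

instance piResidual_characteristic [Finite G] : (piResidual π G).Characteristic :=
  Subgroup.characteristic_iff_map_eq.mpr fun φ => map_piResidual φ.surjective

theorem piResidualIn_le (H : Subgroup G) : piResidualIn π H ≤ H :=
  Subgroup.map_subtype_le _

theorem piResidualIn_mono {A B : Subgroup G} (hAB : A ≤ B) :
    piResidualIn π A ≤ piResidualIn π B := by
  unfold piResidualIn
  rw [← Subgroup.subtype_comp_inclusion hAB, ← Subgroup.map_map]
  exact Subgroup.map_mono (map_piResidual_le _)

theorem piResidualIn_map [Finite G] (f : G →* G') (H : Subgroup G) :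
    piResidualIn π (H.map f) = (piResidualIn π H).map f := by
  rw [piResidualIn, piResidualIn, ← map_piResidual (f.subgroupMap_surjective H),
    Subgroup.map_map, Subgroup.map_map]
  rfl

theorem Subgroup.Normal.piResidualIn [Finite G] {L : Subgroup G} (hL : L.Normal) :
    (piResidualIn π L).Normal :=
  ConjAct.normal_of_characteristic_of_normal

theorem piResidualIn_piResidual [Finite G] :
    piResidualIn π (piResidual π G) = piResidual π G := by
  refine le_antisymm (piResidualIn_le _) (piResidual_le piResidual_normal.piResidualIn ?_)
  rw [piResidualIn, Subgroup.index_map_subtype]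
  exact isPiNumber_index_piResidual.mul isPiNumber_index_piResidual

theorem piResidualIn_piResidualIn [Finite G] (H : Subgroup G) :
    piResidualIn π (piResidualIn π H) = piResidualIn π H := by
  have h := piResidualIn_map (π := π) H.subtype (piResidual π H)
  rwa [piResidualIn_piResidual] at h

theorem piResidualIn_eq_of_le_of_le [Finite G] {H L : Subgroup G}
    (hHL : piResidualIn π H ≤ L) (hLH : L ≤ H) : piResidualIn π L = piResidualIn π H :=
  le_antisymm (piResidualIn_mono hLH) <|
    (piResidualIn_piResidualIn H).ge.trans (piResidualIn_mono hHL)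

end PiResidual

theorem IsDnormal.of_map {π : Set ℕ} {G G' : Type*} [Group G] [Group G'] [Finite G]
    {f : G →* G'} (hf : Function.Surjective f) {H : Subgroup G} (hker : f.ker ≤ H)
    (h : IsDnormal π (H.map f)) : IsDnormal π H := by
  have hH : (H.map f).comap f = H := Subgroup.comap_map_eq_self hker
  rcases h with ⟨hπ, hnormal⟩ | ⟨hπ, hresidual, hnormalizer⟩
  · exact Or.inl ⟨hπ, hH ▸ hnormal.comap f⟩
  refine Or.inr ⟨hπ, ?_, ?_⟩
  · rw [piResidualIn_map] at hresidual
    have hsup : (piResidualIn π H ⊔ f.ker).Normal :=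
      Subgroup.comap_map_eq f _ ▸ hresidual.comap f
    rw [← piResidualIn_eq_of_le_of_le le_sup_left (sup_le (piResidualIn_le H) hker)]
    exact hsup.piResidualIn
  · calc piResidual π G ≤ (piResidual π G').comap f :=
          Subgroup.map_le_iff_le_comap.mp (map_piResidual_le f)
      _ ≤ (Subgroup.normalizer (H.map f : Set G')).comap f := Subgroup.comap_mono hnormalizer
      _ = Subgroup.normalizer (H : Set G) := by
          rw [Subgroup.comap_normalizer_eq_of_surjective _ hf, hH]

theorem dnormal_of_quotient_general (π : Set ℕ)
    (G : Type*) [Group G] [Finite G] (N H : Subgroup G) [N.Normal] (hNH : N ≤ H)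
    (h : IsDnormal π (H.map (QuotientGroup.mk' N))) :
    IsDnormal π H :=
  h.of_map (QuotientGroup.mk'_surjective N) ((QuotientGroup.ker_mk' N).trans_le hNH)

/-- Lemma 1.4(4): if `N ≤ H` and `H/N` is `N^π`-Dnormal in `G/N`, then `H` is
`N^π`-Dnormal in `G`. -/
theorem dnormal_of_quotient (π : Set ℕ) (hπ : ∀ p ∈ π, p.Prime)
    (G : Type*) [Group G] [Finite G] (N H : Subgroup G) [N.Normal] (hNH : N ≤ H)
    (h : IsDnormal π (H.map (QuotientGroup.mk' N))) :
    IsDnormal π H :=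
  dnormal_of_quotient_general π G N H hNH h
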